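/- Let a, b ∈ ℝ^q with a_{ij} := a_i - a_j etc., let {c_i} ⊂ ℝ^{n+1}, {δc_i} ⊂ ℝ^{n+1}, κ ∈ ℝ^q, and suppose ⟨c_{uv}, δc_{uv}⟩ = κ_{uv} a_{uv} holds for all pairs (u,v) among three fixed distinct indices. Then, for distinct indices i, j, k, the quantity ⟨c_{ik} + c_{jk}, δc_{ij}⟩ - (κ_{ik} + κ_{jk}) a_{ij} is invariant under cyclic permutation of (i,j,k). -/
import Mathlib


open scoped InnerProductSpace

/-- The quantity `⟨c_{ik} + c_{jk}, δc_{ij}⟩ - (κ_{ik} + κ_{jk}) a_{ij}`. -/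
noncomputable def lseQty {n q : ℕ} (c δc : Fin q → EuclideanSpace ℝ (Fin (n + 1)))
    (κ a : Fin q → ℝ) (i j k : Fin q) : ℝ :=
  ⟪(c i - c k) + (c j - c k), δc i - δc j⟫_ℝ - ((κ i - κ k) + (κ j - κ k)) * (a i - a j)

/-- If the linearized structure equations hold for the three pairs among three
distinct indices `i, j, k`, then the quantity
`⟨c_{ik} + c_{jk}, δc_{ij}⟩ - (κ_{ik} + κ_{jk}) a_{ij}` is invariant under cyclic
permutation of `(i,j,k)`. -/
theorem stmt11 {n q : ℕ} (c δc : Fin q → EuclideanSpace ℝ (Fin (n + 1)))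
    (κ a : Fin q → ℝ) (i j k : Fin q)
    (hij : i ≠ j) (hjk : j ≠ k) (hki : k ≠ i)
    (h1 : ⟪c i - c j, δc i - δc j⟫_ℝ = (κ i - κ j) * (a i - a j))
    (h2 : ⟪c j - c k, δc j - δc k⟫_ℝ = (κ j - κ k) * (a j - a k))
    (h3 : ⟪c k - c i, δc k - δc i⟫_ℝ = (κ k - κ i) * (a k - a i)) :
    lseQty c δc κ a i j k = lseQty c δc κ a j k i ∧
    lseQty c δc κ a j k i = lseQty c δc κ a k i j := by
  simp only [lseQty, inner_sub_left, inner_sub_right, inner_add_left] at *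
  exact ⟨by linear_combination -h1 - h2 + 2*h3, by linear_combination 2*h1 - h2 - h3⟩
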